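/- arXiv:1703.00676 — 6 statements merged into one kernel-verified Lean document; each statement's English description precedes it below -/
import Mathlib

section
/- Let k be a binary kernel on a set X, i.e., a positive semidefinite kernel on X taking only the values 0 and 1, and let ∼ₖ be the relation on X induced by k, defined by x ∼ₖ y if and only if k(x,y) = 1. Then ∼ₖ is a partial equivalence relation: it is symmetric (x ∼ₖ y implies y ∼ₖ x) and transitive (x ∼ₖ y and y ∼ₖ z imply x ∼ₖ z). -/
/-- A positive semidefinite kernel on a set `X`: a symmetric real-valued function
all of whose finite Gram matrices are positive semidefinite. -/
def IsPSDKernel {X : Type*} (k : X → X → ℝ) : Prop :=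
  (∀ x y, k x y = k y x) ∧
  ∀ (n : ℕ) (x : Fin n → X) (c : Fin n → ℝ),
    0 ≤ ∑ i, ∑ j, c i * c j * k (x i) (x j)

namespace IsPSDKernel

variable {X : Type*} {k : X → X → ℝ}

theorem symm (hk : IsPSDKernel k) (x y : X) : k x y = k y x :=
  hk.1 x y

theorem quadForm_two_nonneg (hk : IsPSDKernel k) (x y : X) (a b : ℝ) :
    0 ≤ a ^ 2 * k x x + b ^ 2 * k y y + 2 * a * b * k x y := by
  have h := hk.2 2 ![x, y] ![a, b]
  simp only [Fin.sum_univ_two, Matrix.cons_val_zero, Matrix.cons_val_one] at h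
  rw [hk.symm y x] at h
  linarith

theorem quadForm_three_nonneg (hk : IsPSDKernel k) (x y z : X) (a b c : ℝ) :
    0 ≤ a ^ 2 * k x x + b ^ 2 * k y y + c ^ 2 * k z z
      + 2 * a * b * k x y + 2 * b * c * k y z + 2 * a * c * k x z := by
  have h := hk.2 3 ![x, y, z] ![a, b, c]
  simp only [Fin.sum_univ_three, Matrix.cons_val_zero, Matrix.cons_val_one,
    Matrix.cons_val_two, Matrix.head_cons, Matrix.tail_cons] at h
  rw [hk.symm y x, hk.symm z x, hk.symm z y] at h
  linarith

theorem apply_eq_zero_of_diag_eq_zero (hk : IsPSDKernel k) {x : X} (hx : k x x = 0) (y : X) :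
    k x y = 0 := by
  by_contra hxy
  -- the form `2 a k x y + k y y` is affine in `a` with nonzero slope, so it takes the value `-1`
  have h := hk.quadForm_two_nonneg x y (-(k y y + 1) / (2 * k x y)) 1
  have hslope : 2 * (-(k y y + 1) / (2 * k x y)) * 1 * k x y = -(k y y + 1) := by
    field_simp
  rw [hx, hslope] at h
  linarith

end IsPSDKernel

/-- For a binary kernel `k` (a positive semidefinite kernel taking only values
`0` and `1`), the induced relation `x ∼ₖ y ⇔ k x y = 1` is a partial equivalence
relation: it is symmetric and transitive. -/
theorem binary_kernel_induced_relation_per {X : Type*} (k : X → X → ℝ)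
    (hpsd : IsPSDKernel k) (hbin : ∀ x y, k x y = 0 ∨ k x y = 1) :
    (∀ x y : X, k x y = 1 → k y x = 1) ∧
    (∀ x y z : X, k x y = 1 → k y z = 1 → k x z = 1) := by
  have hsymm : ∀ x y : X, k x y = 1 → k y x = 1 := fun x y h => hpsd.symm y x ▸ h
  have hdiag : ∀ x y : X, k x y = 1 → k x x = 1 := fun x y h =>
    (hbin x x).resolve_left fun hx => by
      simp [hpsd.apply_eq_zero_of_diag_eq_zero hx y] at h
  refine ⟨hsymm, fun x y z hxy hyz => (hbin x z).resolve_left fun hxz => ?_⟩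
  -- at `(1, -1, 1)` the Gram form equals `2 k x z - 1`, since all other entries are `1`
  have h := hpsd.quadForm_three_nonneg x y z 1 (-1) 1
  rw [hdiag x y hxy, hdiag y x (hsymm x y hxy), hdiag z y (hsymm y z hyz), hxy, hyz, hxz] at h
  norm_num at h
end

section
/- Let k be a binary kernel on a set X, let X_ref = {x ∈ X | k(x,x) = 1}, and let Q = X_ref / ∼ₖ be the set of equivalence classes of the restriction of the induced relation ∼ₖ to X_ref (which is an equivalence relation on X_ref). Define φ : X → (Q → ℝ) by φ(x)_Q = 1 if x ∈ X_ref and Q = [x]ₖ, and φ(x)_Q = 0 otherwise; each φ(x) has at most one nonzero component. Then φ is a feature map of k, i.e., for all x, y ∈ X, Σ_{Q ∈ Q} φ(x)_Q · φ(y)_Q = k(x,y), where the sum has at most one nonzero term. -/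
/-- The equivalence classes of the relation induced by a binary kernel `k` on
`X_ref = {x | k x x = 1}`: the sets of the form `[x]ₖ = {y | k x y = 1}` for
`x ∈ X_ref`. -/
def KernelClasses {X : Type*} (k : X → X → ℝ) : Type _ :=
  {S : Set X // ∃ x, k x x = 1 ∧ S = {y | k x y = 1}}

open Classical in
/-- The map `φ : X → (Q → ℝ)` sending `x ∈ X_ref` to the indicator of its
equivalence class `[x]ₖ` (and `x ∉ X_ref` to the zero vector); each `φ x` has at
most one nonzero component. -/
noncomputable def classFeatureMap {X : Type*} (k : X → X → ℝ) :
    X → KernelClasses k → ℝ :=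
  fun x S => if k x x = 1 ∧ S.val = {y | k x y = 1} then 1 else 0

/-!
Positive semidefiniteness forces a `{0, 1}`-valued kernel to be an equivalence relation on
`X_ref`: the Gram inequality for `(x, y)` with coefficients `(1, -1)` gives reflexivity where
`k x y = 1`, and the one for `(x, y, z)` with coefficients `(1, -1, 1)` gives transitivity.
Hence `k x y = 1` makes `φ x = φ y`, the indicator of the single class `[x]ₖ`, whose square sums
to `1`; and `k x y = 0` puts `x` and `y` in no common class, so every term vanishes.
-/

namespace IsPSDKernel

variable {X : Type*} {k : X → X → ℝ}

theorem two_point_nonneg (hk : IsPSDKernel k) (x y : X) (a b : ℝ) :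
    0 ≤ a * a * k x x + 2 * a * b * k x y + b * b * k y y := by
  have h := hk.2 2 ![x, y] ![a, b]
  simp only [Fin.sum_univ_two, Matrix.cons_val_zero, Matrix.cons_val_one, hk.1 y x] at h
  linarith

theorem three_point_nonneg (hk : IsPSDKernel k) (x y z : X) (a b c : ℝ) :
    0 ≤ a * a * k x x + b * b * k y y + c * c * k z z
      + 2 * a * b * k x y + 2 * b * c * k y z + 2 * a * c * k x z := by
  have h := hk.2 3 ![x, y, z] ![a, b, c]
  simp only [Fin.sum_univ_three, Matrix.cons_val_zero, Matrix.cons_val_one,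
    Matrix.cons_val_two, Matrix.tail_cons, Matrix.head_cons, hk.1 y x, hk.1 z x, hk.1 z y] at h
  linarith

variable (hk : IsPSDKernel k) (hbin : ∀ x y, k x y = 0 ∨ k x y = 1)
include hk hbin

theorem apply_self_eq_one_of_apply_eq_one {x y : X} (h : k x y = 1) : k x x = 1 := by
  have hpos := hk.two_point_nonneg x y 1 (-1)
  rcases hbin x x with hxx | hxx
  · rcases hbin y y with hyy | hyy <;> nlinarith
  · exact hxx

theorem apply_eq_one_trans {x y z : X} (hxy : k x y = 1) (hyz : k y z = 1) : k x z = 1 := by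
  have hxx := hk.apply_self_eq_one_of_apply_eq_one hbin hxy
  have hyy := hk.apply_self_eq_one_of_apply_eq_one hbin hyz
  have hzz := hk.apply_self_eq_one_of_apply_eq_one hbin (hk.1 y z ▸ hyz)
  have hpos := hk.three_point_nonneg x y z 1 (-1) 1
  rcases hbin x z with hxz | hxz
  · nlinarith
  · exact hxz

end IsPSDKernel

section classFeatureMap

variable {X : Type*} {k : X → X → ℝ}

theorem classFeatureMap_mul_self (x : X) (S : KernelClasses k) :
    classFeatureMap k x S * classFeatureMap k x S = classFeatureMap k x S := by
  unfold classFeatureMap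
  split_ifs <;> norm_num

theorem finsum_classFeatureMap {x : X} (hxx : k x x = 1) :
    ∑ᶠ S : KernelClasses k, classFeatureMap k x S = 1 := by
  rw [finsum_eq_single _ ⟨{y | k x y = 1}, x, hxx, rfl⟩]
  · exact if_pos ⟨hxx, rfl⟩
  · intro S hS
    exact if_neg fun h => hS (Subtype.ext h.2)

theorem classFeatureMap_mul_eq_zero {x y : X} (hxy : k x y = 0) (S : KernelClasses k) :
    classFeatureMap k x S * classFeatureMap k y S = 0 := by
  unfold classFeatureMap
  split_ifs with hx hy
  · have hy_mem : y ∈ S.val := hy.2 ▸ hy.1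
    rw [hx.2, Set.mem_ofPred_eq, hxy] at hy_mem
    norm_num at hy_mem
  all_goals norm_num

theorem classFeatureMap_eq_of_apply_eq_one (hk : IsPSDKernel k)
    (hbin : ∀ x y, k x y = 0 ∨ k x y = 1) {x y : X} (hxy : k x y = 1) :
    classFeatureMap k x = classFeatureMap k y := by
  have hyx : k y x = 1 := hk.1 x y ▸ hxy
  have hclass : {z | k x z = 1} = {z | k y z = 1} := by
    ext z
    exact ⟨hk.apply_eq_one_trans hbin hyx, hk.apply_eq_one_trans hbin hxy⟩
  have hxx := hk.apply_self_eq_one_of_apply_eq_one hbin hxy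
  have hyy := hk.apply_self_eq_one_of_apply_eq_one hbin hyx
  funext S
  simp only [classFeatureMap, hxx, hyy, hclass]

end classFeatureMap

/-- For a binary kernel `k` on `X`, the map `φ` sending each `x ∈ X_ref` to the
indicator vector of its equivalence class `[x]ₖ` (indexed by the set `Q` of
equivalence classes of `∼ₖ` on `X_ref`) is a feature map of `k`: for all
`x, y ∈ X`, `∑_{Q ∈ Q} φ(x)_Q · φ(y)_Q = k x y` (a sum with at most one nonzero
term). -/
theorem binary_kernel_feature_map {X : Type*} (k : X → X → ℝ)
    (hpsd : IsPSDKernel k) (hbin : ∀ x y, k x y = 0 ∨ k x y = 1) (x y : X) :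
    ∑ᶠ S : KernelClasses k, classFeatureMap k x S * classFeatureMap k y S = k x y := by
  rcases hbin x y with hxy | hxy
  · rw [finsum_congr (classFeatureMap_mul_eq_zero hxy), finsum_zero, hxy]
  · rw [← classFeatureMap_eq_of_apply_eq_one hpsd hbin hxy,
      finsum_congr (classFeatureMap_mul_self x),
      finsum_classFeatureMap (hpsd.apply_self_eq_one_of_apply_eq_one hbin hxy), hxy]
end

section
/- Let Σ_V and Σ_E be label sets, k_V a positive semidefinite kernel on Σ_V and k_E a positive semidefinite kernel on Σ_E, and ℓ ∈ ℕ a fixed walk length. For a finite labeled graph G (a simple graph on a finite vertex set with a vertex labeling into Σ_V and an edge labeling into Σ_E), let W_ℓ(G) denote the finite set of walks of length ℓ in G, and for walks w = (v₀,e₁,v₁,…,e_ℓ,v_ℓ) in G and w' = (v₀',e₁',…,v_ℓ') in H define k_W(w,w') = Π_{i=0}^{ℓ} k_V(lab(vᵢ), lab(vᵢ')) · Π_{i=1}^{ℓ} k_E(lab(eᵢ), lab(eᵢ')). Then the ℓ-walk kernel K^=_ℓ(G,H) = Σ_{w ∈ W_ℓ(G)} Σ_{w' ∈ W_ℓ(H)}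 k_W(w,w') is positive semidefinite: for every finite family of labeled graphs G₁,…,Gₙ and all c₁,…,cₙ ∈ ℝ, Σᵢ Σⱼ cᵢ cⱼ K^=_ℓ(Gᵢ,Gⱼ) ≥ 0. -/
/-- A labeled graph: a simple graph on a finite vertex set together with a
vertex labeling into `SV` and an edge labeling into `SE` (given as a labeling
of unordered vertex pairs; only its values on edges are ever used). -/
structure LabeledGraph (SV SE : Type*) where
  V : Type
  [fintypeV : Fintype V]
  G : SimpleGraph V
  labV : V → SV
  labE : Sym2 V → SE

attribute [instance] LabeledGraph.fintypeV

/-- `w : Fin (ℓ+1) → G.V` is (the vertex sequence of) a walk of length `ℓ` in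
`G`: consecutive vertices are adjacent. -/
def LabeledGraph.IsWalk {SV SE : Type*} (G : LabeledGraph SV SE) {ℓ : ℕ}
    (w : Fin (ℓ + 1) → G.V) : Prop :=
  ∀ i : Fin ℓ, G.G.Adj (w i.castSucc) (w i.succ)

open Classical in
/-- The `ℓ`-walk kernel `K^=_ℓ(G,H) = Σ_{w ∈ W_ℓ(G)} Σ_{w' ∈ W_ℓ(H)} k_W(w,w')`,
where for walks `w = (v₀,e₁,…,v_ℓ)` and `w' = (v₀',e₁',…,v_ℓ')`,
`k_W(w,w') = Π_{i=0}^{ℓ} k_V(lab(vᵢ),lab(vᵢ')) · Π_{i=1}^{ℓ} k_E(lab(eᵢ),lab(eᵢ'))`. -/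
noncomputable def walkKernel {SV SE : Type*} (kV : SV → SV → ℝ)
    (kE : SE → SE → ℝ) (ℓ : ℕ) (G H : LabeledGraph SV SE) : ℝ :=
  ∑ w : Fin (ℓ + 1) → G.V, ∑ w' : Fin (ℓ + 1) → H.V,
    if G.IsWalk w ∧ H.IsWalk w' then
      (∏ i : Fin (ℓ + 1), kV (G.labV (w i)) (H.labV (w' i))) *
      (∏ i : Fin ℓ, kE (G.labE s(w i.castSucc, w i.succ))
                       (H.labE s(w' i.castSucc, w' i.succ)))
    else 0

/-!
The walk kernel is an R-convolution kernel: `K(G, H) = Σ_{w, w'} k_W(w, w')` with `w, w'` running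
over the finitely many vertex sequences of `G` and `H`, once `k_W` is extended by zero to
sequences that are not walks. That extension is the product of the rank-one kernel
`1_walk(w) · 1_walk(w')` with pullbacks of `k_V` and `k_E` along the label maps, hence positive
semidefinite by the Schur product theorem. Summing a positive semidefinite kernel over finite
fibres preserves positive semidefiniteness, because the quadratic form of the summed kernel at
`c` is the quadratic form of the original kernel at `(i, w) ↦ c i`.
-/

section Kernels

open Matrix

variable {X ι : Type*} {k k₁ k₂ : X → X → ℝ}

def kernelGram (k : X → X → ℝ) (x : ι → X) : Matrix ι ι ℝ :=
  of fun i j => k (x i) (x j)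

theorem star_dotProduct_kernelGram_mulVec [Fintype ι] (k : X → X → ℝ) (x : ι → X)
    (c : ι → ℝ) :
    star c ⬝ᵥ (kernelGram k x *ᵥ c) = ∑ i, ∑ j, c i * c j * k (x i) (x j) := by
  simp only [kernelGram, dotProduct, mulVec, of_apply, star_trivial,
    Finset.mul_sum]
  exact Finset.sum_congr rfl fun i _ => Finset.sum_congr rfl fun j _ => by ring

theorem isPSDKernel_iff_posSemidef_kernelGram :
    IsPSDKernel k ↔ ∀ n (x : Fin n → X), (kernelGram k x).PosSemidef := by
  refine ⟨fun hk n x => ?_, fun hk => ⟨fun a b => ?_, fun n x c => ?_⟩⟩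
  · refine .of_dotProduct_mulVec_nonneg (IsHermitian.ext fun i j => hk.1 _ _) fun c => ?_
    rw [star_dotProduct_kernelGram_mulVec]
    exact hk.2 n x c
  · simpa [kernelGram] using ((hk 2 ![a, b]).isHermitian.apply 0 1).symm
  · rw [← star_dotProduct_kernelGram_mulVec]
    exact (hk n x).dotProduct_mulVec_nonneg c

theorem IsPSDKernel.posSemidef_kernelGram [Finite ι] (hk : IsPSDKernel k) (x : ι → X) :
    (kernelGram k x).PosSemidef := by
  have := Fintype.ofFinite ι
  let e := Fintype.equivFin ι
  have hsub : (kernelGram k (x ∘ e.symm)).submatrix e e = kernelGram k x := by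
    ext i j
    simp [kernelGram]
  exact hsub ▸ (isPSDKernel_iff_posSemidef_kernelGram.1 hk _ _).submatrix e

theorem IsPSDKernel.sum_sum_mul_nonneg [Fintype ι] (hk : IsPSDKernel k) (x : ι → X)
    (c : ι → ℝ) : 0 ≤ ∑ i, ∑ j, c i * c j * k (x i) (x j) :=
  star_dotProduct_kernelGram_mulVec k x c ▸
    (hk.posSemidef_kernelGram x).dotProduct_mulVec_nonneg c

theorem IsPSDKernel.comp {Y : Type*} (hk : IsPSDKernel k) (f : Y → X) :
    IsPSDKernel fun a b => k (f a) (f b) :=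
  ⟨fun _ _ => hk.1 _ _, fun n x c => hk.2 n (f ∘ x) c⟩

theorem isPSDKernel_mul_self (f : X → ℝ) : IsPSDKernel fun a b => f a * f b :=
  isPSDKernel_iff_posSemidef_kernelGram.2 fun _ x =>
    posSemidef_vecMulVec_self_star (f ∘ x)

theorem IsPSDKernel.mul (h₁ : IsPSDKernel k₁) (h₂ : IsPSDKernel k₂) :
    IsPSDKernel fun a b => k₁ a b * k₂ a b :=
  isPSDKernel_iff_posSemidef_kernelGram.2 fun _ x =>
    (h₁.posSemidef_kernelGram x).hadamard (h₂.posSemidef_kernelGram x)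

theorem isPSDKernel_prod {κ : Type*} (s : Finset κ) {k : κ → X → X → ℝ}
    (hk : ∀ t ∈ s, IsPSDKernel (k t)) : IsPSDKernel fun a b => ∏ t ∈ s, k t a b := by
  classical
  induction s using Finset.induction with
  | empty => simpa using isPSDKernel_mul_self fun _ : X => (1 : ℝ)
  | insert t s ht ih =>
    simp only [Finset.prod_insert ht]
    exact (hk t (s.mem_insert_self t)).mul (ih fun u hu => hk u (Finset.mem_insert_of_mem hu))

theorem IsPSDKernel.sum_sigma {F : X → Type*} [∀ x, Fintype (F x)]
    {k : (Σ x, F x) → (Σ x, F x) → ℝ} (hk : IsPSDKernel k) :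
    IsPSDKernel fun x y => ∑ a : F x, ∑ b : F y, k ⟨x, a⟩ ⟨y, b⟩ := by
  refine ⟨fun x y => ?_, fun n x c => ?_⟩
  · simp only [hk.1 ⟨x, _⟩]
    exact Finset.sum_comm
  · have hquad := hk.sum_sum_mul_nonneg (ι := Σ i, F (x i)) (fun p => ⟨x p.1, p.2⟩)
      (fun p => c p.1)
    simp only [Fintype.sum_sigma] at hquad
    refine hquad.trans_eq (Finset.sum_congr rfl fun i _ => ?_)
    simp only [Finset.mul_sum]
    exact Finset.sum_comm

end Kernels

abbrev VertexSeq (SV SE : Type*) (ℓ : ℕ) := Σ G : LabeledGraph SV SE, Fin (ℓ + 1) → G.V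

namespace VertexSeq

variable {SV SE : Type*} {ℓ : ℕ}

open Classical in
noncomputable def walkIndicator (p : VertexSeq SV SE ℓ) : ℝ :=
  if p.1.IsWalk p.2 then 1 else 0

def vertexLabel (t : Fin (ℓ + 1)) (p : VertexSeq SV SE ℓ) : SV :=
  p.1.labV (p.2 t)

def edgeLabel (t : Fin ℓ) (p : VertexSeq SV SE ℓ) : SE :=
  p.1.labE s(p.2 t.castSucc, p.2 t.succ)

/-- The walk kernel `k_W`, extended by zero to pairs of vertex sequences that are not both walks. -/
noncomputable def walkPairKernel (kV : SV → SV → ℝ) (kE : SE → SE → ℝ)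
    (p q : VertexSeq SV SE ℓ) : ℝ :=
  walkIndicator p * walkIndicator q *
    ((∏ t, kV (vertexLabel t p) (vertexLabel t q)) * ∏ t, kE (edgeLabel t p) (edgeLabel t q))

theorem isPSDKernel_walkPairKernel {kV : SV → SV → ℝ} {kE : SE → SE → ℝ}
    (hV : IsPSDKernel kV) (hE : IsPSDKernel kE) :
    IsPSDKernel (walkPairKernel kV kE (ℓ := ℓ)) :=
  (isPSDKernel_mul_self walkIndicator).mul <|
    (isPSDKernel_prod _ fun t _ => hV.comp (vertexLabel t)).mul
      (isPSDKernel_prod _ fun t _ => hE.comp (edgeLabel t))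

end VertexSeq

open VertexSeq in
theorem walkKernel_eq_sum_walkPairKernel {SV SE : Type*} (kV : SV → SV → ℝ)
    (kE : SE → SE → ℝ) (ℓ : ℕ) (G H : LabeledGraph SV SE) :
    walkKernel kV kE ℓ G H =
      ∑ w : Fin (ℓ + 1) → G.V, ∑ w' : Fin (ℓ + 1) → H.V,
        walkPairKernel kV kE ⟨G, w⟩ ⟨H, w'⟩ := by
  refine Finset.sum_congr rfl fun w _ => Finset.sum_congr rfl fun w' _ => ?_
  by_cases hw : G.IsWalk w <;> by_cases hw' : H.IsWalk w' <;>
    simp [walkPairKernel, walkIndicator, vertexLabel, edgeLabel, hw, hw']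

/-- If `k_V` and `k_E` are positive semidefinite kernels on the label sets, then
the `ℓ`-walk kernel is positive semidefinite: every finite Gram matrix on
labeled graphs it produces is positive semidefinite. -/
theorem walk_kernel_psd {SV SE : Type*} (kV : SV → SV → ℝ) (kE : SE → SE → ℝ)
    (hV : IsPSDKernel kV) (hE : IsPSDKernel kE) (ℓ : ℕ)
    (n : ℕ) (Gs : Fin n → LabeledGraph SV SE) (c : Fin n → ℝ) :
    0 ≤ ∑ i, ∑ j, c i * c j * walkKernel kV kE ℓ (Gs i) (Gs j) := by
  simpa only [← walkKernel_eq_sum_walkPairKernel] using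
    (VertexSeq.isPSDKernel_walkPairKernel (ℓ := ℓ) hV hE).sum_sigma.2 n Gs c
end

section
/- Let U be a set, k_W, k_V : U × U → ℝ functions, φ^W : U → (Fin d_W → ℝ) a map with ⟨φ^W(v), φ^W(w)⟩ = k_W(v,w) for all v, w ∈ U, and φ̃^V : U → (Fin D → ℝ) a map. Let G, H ⊆ U be finite subsets, ε > 0, and M ≥ 0 with |k_W(v,w)| ≤ M for all v ∈ G, w ∈ H, and suppose |⟨φ̃^V(v), φ̃^V(w)⟩ − k_V(v,w)| < ε for all v ∈ G and w ∈ H. Define φ̃^WV(G) = Σ_{v ∈ G} φ^W(v) ⊗ φ̃^V(v) and similarly for H. Then |⟨φ̃^WV(G), φ̃^WV(H)⟩ − Σ_{v ∈ G} Σ_{w ∈ H} k_W(v,w) · k_V(v,w)| ≤ ε · M · |G| · |H|. -/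
/-! Since `φ^W` is an exact feature map, the dot product of the two sums of Kronecker products
equals `Σ_{v ∈ G} Σ_{w ∈ H} k_W(v,w) ⟨φ̃^V(v), φ̃^V(w)⟩`. Its difference from the weighted vertex
kernel is therefore a sum of `|G| |H|` terms `k_W(v,w) (⟨φ̃^V(v), φ̃^V(w)⟩ - k_V(v,w))`, each at most
`M ε` in absolute value. -/

open Finset

theorem sum_kronecker_mul_sum_kronecker {R α ι κ : Type*} [CommSemiring R] [Fintype ι]
    [Fintype κ] (a : α → ι → R) (b : α → κ → R) (s t : Finset α) :
    ∑ p : ι × κ, (∑ v ∈ s, a v p.1 * b v p.2) * (∑ w ∈ t, a w p.1 * b w p.2) =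
      ∑ v ∈ s, ∑ w ∈ t, (∑ i, a v i * a w i) * (∑ j, b v j * b w j) := by
  simp_rw [sum_mul_sum, ← Fintype.sum_prod_type']
  rw [sum_comm]
  refine sum_congr rfl fun v _ => ?_
  rw [sum_comm]
  exact sum_congr rfl fun w _ => sum_congr rfl fun p _ => by ring

theorem abs_sum_sum_mul_sub_sum_sum_mul_le {α β : Type*} (s : Finset α) (t : Finset β)
    (k x y : α → β → ℝ) {M ε : ℝ} (hk : ∀ v ∈ s, ∀ w ∈ t, |k v w| ≤ M)
    (hxy : ∀ v ∈ s, ∀ w ∈ t, |x v w - y v w| ≤ ε) :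
    |∑ v ∈ s, ∑ w ∈ t, k v w * x v w - ∑ v ∈ s, ∑ w ∈ t, k v w * y v w| ≤
      ε * M * #s * #t := by
  rw [← sum_product', ← sum_product', ← sum_sub_distrib]
  have hterm : ∀ p ∈ s ×ˢ t, |k p.1 p.2 * x p.1 p.2 - k p.1 p.2 * y p.1 p.2| ≤ ε * M := by
    rintro ⟨v, w⟩ hp
    rw [mem_product] at hp
    have hkM := hk v hp.1 w hp.2
    rw [← mul_sub, abs_mul, mul_comm ε]
    exact mul_le_mul hkM (hxy v hp.1 w hp.2) (abs_nonneg _) ((abs_nonneg _).trans hkM)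
  calc _ ≤ ∑ p ∈ s ×ˢ t, |k p.1 p.2 * x p.1 p.2 - k p.1 p.2 * y p.1 p.2| :=
        abs_sum_le_sum_abs _ _
    _ ≤ #(s ×ˢ t) • (ε * M) := sum_le_card_nsmul _ _ _ hterm
    _ = ε * M * #s * #t := by rw [card_product, nsmul_eq_mul]; push_cast; ring

theorem weighted_vertex_kernel_approx_general {U : Type*} {dW D : ℕ}
    (kW kV : U → U → ℝ) (φW : U → Fin dW → ℝ) (φV : U → Fin D → ℝ)
    (hW : ∀ v w : U, ∑ i, φW v i * φW w i = kW v w)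
    (G H : Finset U) (ε M : ℝ)
    (hMb : ∀ v ∈ G, ∀ w ∈ H, |kW v w| ≤ M)
    (happrox : ∀ v ∈ G, ∀ w ∈ H, |(∑ j, φV v j * φV w j) - kV v w| < ε) :
    |(∑ p : Fin dW × Fin D,
        (∑ v ∈ G, φW v p.1 * φV v p.2) * (∑ w ∈ H, φW w p.1 * φV w p.2)) -
      ∑ v ∈ G, ∑ w ∈ H, kW v w * kV v w| ≤ ε * M * G.card * H.card := by
  simp only [sum_kronecker_mul_sum_kronecker, hW]
  exact abs_sum_sum_mul_sub_sum_sum_mul_le G H kW _ kV hMb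
    fun v hv w hw => (happrox v hv w hw).le

/-- Approximation guarantee for weighted vertex kernels: if `φ^W` is an exact
feature map of the weight kernel `k_W`, `|k_W| ≤ M` on `G × H`, and `φ̃^V` is a
finite-dimensional approximate feature map of the vertex kernel `k_V` that is
uniformly `ε`-accurate on the vertices of `G` and `H`, then the dot product of
the approximate feature vectors `φ̃^WV(G) = Σ_{v ∈ G} φ^W(v) ⊗ φ̃^V(v)` and
`φ̃^WV(H)` differs from the weighted vertex kernel
`Σ_{v ∈ G} Σ_{w ∈ H} k_W(v,w) · k_V(v,w)` by at most `ε · M · |G| · |H|`. -/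
theorem weighted_vertex_kernel_approx {U : Type*} {dW D : ℕ}
    (kW kV : U → U → ℝ) (φW : U → Fin dW → ℝ) (φV : U → Fin D → ℝ)
    (hW : ∀ v w : U, ∑ i, φW v i * φW w i = kW v w)
    (G H : Finset U) (ε M : ℝ) (hε : 0 < ε) (hM : 0 ≤ M)
    (hMb : ∀ v ∈ G, ∀ w ∈ H, |kW v w| ≤ M)
    (happrox : ∀ v ∈ G, ∀ w ∈ H, |(∑ j, φV v j * φV w j) - kV v w| < ε) :
    |(∑ p : Fin dW × Fin D,
        (∑ v ∈ G, φW v p.1 * φV v p.2) * (∑ w ∈ H, φW w p.1 * φV w p.2)) -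
      ∑ v ∈ G, ∑ w ∈ H, kW v w * kV v w| ≤ ε * M * G.card * H.card :=
  weighted_vertex_kernel_approx_general kW kV φW φV hW G H ε M hMb happrox
end

section
/- Let G and H be finite simple graphs, k_V : V(G) × V(H) → ℝ a vertex weight function and k_E : E(G) × E(H) → ℝ an edge weight function, and ℓ ∈ ℕ. Define r : ℕ → (V(G) × V(H)) → ℝ recursively by r₀(u,u') = k_V(u,u') and, for i ≥ 1, rᵢ(u,u') = Σ_{v ∈ N_G(u)} Σ_{v' ∈ N_H(u')} k_V(u,u') · k_E(uv, u'v') · r_{i-1}(v,v'). Then Σ_{(u,u') ∈ V(G) × V(H)} r_ℓ(u,u') = Σ_{w ∈ W_ℓ(G)} Σ_{w' ∈ W_ℓ(H)} k_W(w,w'), where for walks w = (v₀,e₁,…,v_ℓ) and w' = (v₀',e₁',…,v_ℓ'), k_W(w,w') = Π_{i=0}^{ℓ} k_V(vᵢ,vᵢ') · Π_{i=1}^{ℓ} k_E(eᵢ,eᵢ'). In other words, the recursive weighted walk count on the (weighted direct) product of G and H computes the ℓ-walk kernel K^=_ℓ(G,H). -/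
/-!
A pair of walks of length `ℓ + 1` is a first step `(u, u') → (v, v')` in the direct product
followed by a pair of walks of length `ℓ` from `(v, v')`, and the walk-kernel weight factors
accordingly as `k_V(u,u') · k_E(uv,u'v')` times the weight of the tail. Hence `r_ℓ(u,u')` is the
sum of the weights of all pairs of `ℓ`-walks starting at `(u, u')`, and summing over the start
gives the kernel.
-/

/-- The recursive weighted walk count on the (weighted direct) product of `G`
and `H`: `r₀(u,u') = k_V(u,u')` and
`rᵢ(u,u') = Σ_{v ∈ N_G(u)} Σ_{v' ∈ N_H(u')} k_V(u,u') · k_E(uv,u'v') · r_{i-1}(v,v')`. -/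
noncomputable def rWalk {VG VH : Type*} [Fintype VG] [Fintype VH]
    (G : SimpleGraph VG) (H : SimpleGraph VH)
    [DecidableRel G.Adj] [DecidableRel H.Adj]
    (kV : VG → VH → ℝ) (kE : Sym2 VG → Sym2 VH → ℝ) : ℕ → VG → VH → ℝ
  | 0 => fun u u' => kV u u'
  | (i + 1) => fun u u' =>
      ∑ v ∈ G.neighborFinset u, ∑ v' ∈ H.neighborFinset u',
        kV u u' * kE s(u, v) s(u', v') * rWalk G H kV kE i v v'

theorem Fintype.sum_fin_succ_pi_eq_sum_cons {β M : Type*} [Fintype β] [AddCommMonoid M]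
    (n : ℕ) (F : (Fin (n + 1) → β) → M) :
    ∑ f : Fin (n + 1) → β, F f = ∑ v : β, ∑ g : Fin n → β, F (Fin.cons v g) := by
  rw [← (Fin.consEquiv fun _ => β).sum_comp F, Fintype.sum_prod_type]
  rfl

namespace WalkKernel

variable {VG VH : Type*} {n : ℕ}

/-- The walk-kernel weight `k_W(w, w')`. -/
def weight (kV : VG → VH → ℝ) (kE : Sym2 VG → Sym2 VH → ℝ)
    (w : Fin (n + 1) → VG) (w' : Fin (n + 1) → VH) : ℝ :=
  (∏ i : Fin (n + 1), kV (w i) (w' i)) *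
    ∏ i : Fin n, kE s(w i.castSucc, w i.succ) s(w' i.castSucc, w' i.succ)

theorem weight_cons (kV : VG → VH → ℝ) (kE : Sym2 VG → Sym2 VH → ℝ) (u : VG) (u' : VH)
    (w : Fin (n + 1) → VG) (w' : Fin (n + 1) → VH) :
    weight kV kE (Fin.cons u w) (Fin.cons u' w') =
      kV u u' * kE s(u, w 0) s(u', w' 0) * weight kV kE w w' := by
  simp only [weight, Fin.prod_univ_succ, Fin.cons_zero, Fin.cons_succ, ← Fin.succ_castSucc,
    Fin.castSucc_zero]
  ring

theorem forall_adj_cons_iff {V : Type*} (G : SimpleGraph V) (u : V) (w : Fin (n + 1) → V) :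
    (∀ i : Fin (n + 1), G.Adj ((Fin.cons u w : Fin (n + 2) → V) i.castSucc)
        ((Fin.cons u w : Fin (n + 2) → V) i.succ)) ↔
      G.Adj u (w 0) ∧ ∀ i : Fin n, G.Adj (w i.castSucc) (w i.succ) := by
  simp only [Fin.forall_fin_succ, Fin.cons_zero, Fin.cons_succ, ← Fin.succ_castSucc,
    Fin.castSucc_zero]

def term (G : SimpleGraph VG) (H : SimpleGraph VH) [DecidableRel G.Adj] [DecidableRel H.Adj]
    (kV : VG → VH → ℝ) (kE : Sym2 VG → Sym2 VH → ℝ)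
    (w : Fin (n + 1) → VG) (w' : Fin (n + 1) → VH) : ℝ :=
  if (∀ i : Fin n, G.Adj (w i.castSucc) (w i.succ)) ∧
      (∀ i : Fin n, H.Adj (w' i.castSucc) (w' i.succ)) then
    weight kV kE w w'
  else 0

theorem term_cons (G : SimpleGraph VG) (H : SimpleGraph VH)
    [DecidableRel G.Adj] [DecidableRel H.Adj]
    (kV : VG → VH → ℝ) (kE : Sym2 VG → Sym2 VH → ℝ) (u : VG) (u' : VH)
    (w : Fin (n + 1) → VG) (w' : Fin (n + 1) → VH) :
    term G H kV kE (Fin.cons u w) (Fin.cons u' w') =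
      if G.Adj u (w 0) ∧ H.Adj u' (w' 0) then
        kV u u' * kE s(u, w 0) s(u', w' 0) * term G H kV kE w w'
      else 0 := by
  simp only [term, forall_adj_cons_iff, weight_cons]
  split_ifs <;> simp_all

end WalkKernel

open WalkKernel in
theorem rWalk_eq_sum_term {VG VH : Type*} [Fintype VG] [Fintype VH]
    (G : SimpleGraph VG) (H : SimpleGraph VH) [DecidableRel G.Adj] [DecidableRel H.Adj]
    (kV : VG → VH → ℝ) (kE : Sym2 VG → Sym2 VH → ℝ) (ℓ : ℕ) (u : VG) (u' : VH) :
    rWalk G H kV kE ℓ u u' =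
      ∑ w : Fin ℓ → VG, ∑ w' : Fin ℓ → VH, term G H kV kE (Fin.cons u w) (Fin.cons u' w') := by
  induction ℓ generalizing u u' with
  | zero => simp [rWalk, term, weight]
  | succ n ih =>
    calc rWalk G H kV kE (n + 1) u u'
        = ∑ v, ∑ v', if G.Adj u v ∧ H.Adj u' v' then
            kV u u' * kE s(u, v) s(u', v') *
              ∑ g : Fin n → VG, ∑ g' : Fin n → VH, term G H kV kE (Fin.cons v g) (Fin.cons v' g')
            else 0 := by
          simp only [rWalk, ih, SimpleGraph.neighborFinset_eq_filter, Finset.sum_filter, ite_and,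
            Finset.sum_ite_irrel, Finset.sum_const_zero]
      _ = ∑ v, ∑ v', ∑ g : Fin n → VG, ∑ g' : Fin n → VH,
            term G H kV kE (Fin.cons u (Fin.cons v g)) (Fin.cons u' (Fin.cons v' g')) := by
          simp only [term_cons, Fin.cons_zero, Finset.mul_sum, Finset.sum_ite_irrel,
            Finset.sum_const_zero]
      _ = _ := by
          simp only [Fintype.sum_fin_succ_pi_eq_sum_cons]
          exact Finset.sum_congr rfl fun v _ => Finset.sum_comm

open Classical in
/-- The recursive weighted walk count on the product of `G` and `H` computes the
`ℓ`-walk kernel: `Σ_{(u,u')} r_ℓ(u,u') = Σ_{w ∈ W_ℓ(G)} Σ_{w' ∈ W_ℓ(H)} k_W(w,w')`,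
where for walks `w = (v₀,e₁,…,v_ℓ)` and `w' = (v₀',e₁',…,v_ℓ')`,
`k_W(w,w') = Π_{i=0}^{ℓ} k_V(vᵢ,vᵢ') · Π_{i=1}^{ℓ} k_E(eᵢ,eᵢ')`. -/
theorem rWalk_eq_walk_kernel {VG VH : Type*} [Fintype VG] [Fintype VH]
    (G : SimpleGraph VG) (H : SimpleGraph VH)
    [DecidableRel G.Adj] [DecidableRel H.Adj]
    (kV : VG → VH → ℝ) (kE : Sym2 VG → Sym2 VH → ℝ) (ℓ : ℕ) :
    ∑ u : VG, ∑ u' : VH, rWalk G H kV kE ℓ u u' =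
      ∑ w : Fin (ℓ + 1) → VG, ∑ w' : Fin (ℓ + 1) → VH,
        if (∀ i : Fin ℓ, G.Adj (w i.castSucc) (w i.succ)) ∧
            (∀ i : Fin ℓ, H.Adj (w' i.castSucc) (w' i.succ)) then
          (∏ i : Fin (ℓ + 1), kV (w i) (w' i)) *
          (∏ i : Fin ℓ, kE s(w i.castSucc, w i.succ) s(w' i.castSucc, w' i.succ))
        else 0 := by
  change _ = ∑ w, ∑ w', WalkKernel.term G H kV kE w w'
  simp only [rWalk_eq_sum_term, Fintype.sum_fin_succ_pi_eq_sum_cons]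
  exact Finset.sum_congr rfl fun u _ => Finset.sum_comm
end

section
/- Let Σ_V be a label set with a positive semidefinite kernel k_V, and let k_E be a positive semidefinite kernel on ℕ ∪ {∞} (path lengths) satisfying k_E(d, d') = 0 whenever d = ∞ or d' = ∞. For finite labeled graphs G and H (simple graphs on finite vertex sets with vertex labels in Σ_V), let d_{uv} ∈ ℕ ∪ {∞} denote the shortest-path distance between vertices u and v. Then the shortest-path kernel K^SP(G,H) = Σ_{u,v ∈ V(G), u ≠ v} Σ_{w,z ∈ V(H), w ≠ z} k_V(lab(u),lab(w)) · k_E(d_{uv}, d_{wz}) · k_V(lab(v),lab(z)) is positive semidefinite: for every finite family of labeled graphs G₁,…,Gₙ and all c₁,…,cₙ ∈ ℝ, Σᵢ Σⱼ cᵢ cⱼ K^SP(Gᵢ,Gⱼ) ≥ 0. -/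
/-- A vertex-labeled graph: a simple graph on a finite vertex set together with
a vertex labeling into `SV`. -/
structure VLGraph (SV : Type*) where
  V : Type
  [fintypeV : Fintype V]
  G : SimpleGraph V
  labV : V → SV

attribute [instance] VLGraph.fintypeV

open Classical in
/-- The shortest-path kernel
`K^SP(G,H) = Σ_{u,v ∈ V(G), u≠v} Σ_{w,z ∈ V(H), w≠z}
  k_V(lab u, lab w) · k_E(d_{uv}, d_{wz}) · k_V(lab v, lab z)`,
where `d_{uv} ∈ ℕ∞` is the shortest-path distance (`∞` for vertices in
different connected components). -/
noncomputable def spKernel {SV : Type*} (kV : SV → SV → ℝ)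
    (kE : ℕ∞ → ℕ∞ → ℝ) (G H : VLGraph SV) : ℝ :=
  ∑ u : G.V, ∑ v : G.V, ∑ w : H.V, ∑ z : H.V,
    if u ≠ v ∧ w ≠ z then
      kV (G.labV u) (H.labV w) * kE (G.G.edist u v) (H.G.edist w z) *
        kV (G.labV v) (H.labV z)
    else 0

open Matrix

section Kernel

variable {X Y : Type*}

theorem star_dotProduct_kernelMatrix_mulVec {ι : Type*} [Fintype ι] (k : X → X → ℝ) (x : ι → X)
    (c : ι → ℝ) :
    star c ⬝ᵥ (Matrix.of (fun i j => k (x i) (x j)) *ᵥ c) =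
      ∑ i, ∑ j, c i * c j * k (x i) (x j) := by
  simp only [dotProduct, mulVec, Pi.star_apply, star_trivial, of_apply, Finset.mul_sum]
  exact Finset.sum_congr rfl fun i _ => Finset.sum_congr rfl fun j _ => by ring

theorem isPSDKernel_iff_posSemidef {k : X → X → ℝ} :
    IsPSDKernel k ↔
      ∀ (n : ℕ) (x : Fin n → X), (Matrix.of fun i j => k (x i) (x j)).PosSemidef := by
  refine ⟨fun hk n x => ?_, fun h => ⟨fun a b => ?_, fun n x c => ?_⟩⟩
  · refine posSemidef_iff_dotProduct_mulVec.mpr ⟨?_, fun c => ?_⟩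
    · ext i j
      simp [hk.1 (x i) (x j)]
    · rw [star_dotProduct_kernelMatrix_mulVec]
      exact hk.2 n x c
  · simpa using ((h 2 ![a, b]).isHermitian.apply 0 1).symm
  · rw [← star_dotProduct_kernelMatrix_mulVec]
    exact (h n x).dotProduct_mulVec_nonneg c

theorem IsPSDKernel.posSemidef_gram {k : X → X → ℝ} (hk : IsPSDKernel k) {ι : Type*}
    [Fintype ι] (x : ι → X) : (Matrix.of fun i j => k (x i) (x j)).PosSemidef :=
  (posSemidef_submatrix_equiv (Fintype.equivFin ι).symm).mp
    (isPSDKernel_iff_posSemidef.mp hk _ (x ∘ (Fintype.equivFin ι).symm))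

theorem IsPSDKernel.gram_nonneg {k : X → X → ℝ} (hk : IsPSDKernel k) {ι : Type*} [Fintype ι]
    (x : ι → X) (c : ι → ℝ) : 0 ≤ ∑ i, ∑ j, c i * c j * k (x i) (x j) := by
  rw [← star_dotProduct_kernelMatrix_mulVec]
  exact (hk.posSemidef_gram x).dotProduct_mulVec_nonneg c

theorem IsPSDKernel.mul_s18 {kX : X → X → ℝ} {kY : Y → Y → ℝ} (hX : IsPSDKernel kX)
    (hY : IsPSDKernel kY) : IsPSDKernel fun p q : X × Y => kX p.1 q.1 * kY p.2 q.2 :=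
  isPSDKernel_iff_posSemidef.mpr fun _ x =>
    (hX.posSemidef_gram (Prod.fst ∘ x)).hadamard (hY.posSemidef_gram (Prod.snd ∘ x))

/-- Haussler's R-convolution construction, with weights. -/
theorem IsPSDKernel.featureSum {k : X → X → ℝ} (hk : IsPSDKernel k) {F : Y → Type*}
    [∀ g, Fintype (F g)] (w : ∀ g, F g → ℝ) (φ : ∀ g, F g → X) :
    IsPSDKernel fun g h => ∑ p, ∑ q, w g p * w h q * k (φ g p) (φ h q) := by
  refine ⟨fun g h => ?_, fun n y c => ?_⟩
  · dsimp only
    rw [Finset.sum_comm]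
    exact Finset.sum_congr rfl fun q _ => Finset.sum_congr rfl fun p _ => by
      rw [hk.1]; ring
  · refine (hk.gram_nonneg (fun σ : Σ i, F (y i) => φ (y σ.1) σ.2)
      (fun σ => c σ.1 * w (y σ.1) σ.2)).trans_eq ?_
    simp only [Fintype.sum_sigma, Finset.mul_sum]
    refine Finset.sum_congr rfl fun i _ => ?_
    rw [Finset.sum_comm]
    exact Finset.sum_congr rfl fun j _ => Finset.sum_congr rfl fun p _ =>
      Finset.sum_congr rfl fun q _ => by ring

end Kernel

open Classical in
theorem spKernel_eq_featureSum {SV : Type*} (kV : SV → SV → ℝ) (kE : ℕ∞ → ℕ∞ → ℝ) :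
    spKernel kV kE = fun G H =>
      ∑ p : G.V × G.V, ∑ q : H.V × H.V,
        (if p.1 ≠ p.2 then 1 else 0) * (if q.1 ≠ q.2 then 1 else 0) *
          (kV (G.labV p.1) (H.labV q.1) * kE (G.G.edist p.1 p.2) (H.G.edist q.1 q.2) *
            kV (G.labV p.2) (H.labV q.2)) := by
  funext G H
  simp only [spKernel, Fintype.sum_prod_type]
  refine Finset.sum_congr rfl fun u _ => Finset.sum_congr rfl fun v _ =>
    Finset.sum_congr rfl fun w _ => Finset.sum_congr rfl fun z _ => ?_
  split_ifs <;> simp_all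

theorem isPSDKernel_spKernel {SV : Type*} {kV : SV → SV → ℝ} {kE : ℕ∞ → ℕ∞ → ℝ}
    (hV : IsPSDKernel kV) (hE : IsPSDKernel kE) : IsPSDKernel (spKernel kV kE) := by
  classical
  rw [spKernel_eq_featureSum]
  exact ((hV.mul_s18 hE).mul_s18 hV).featureSum (F := fun G : VLGraph SV => G.V × G.V)
    (fun G p => if p.1 ≠ p.2 then 1 else 0)
    (fun G p => ((G.labV p.1, G.G.edist p.1 p.2), G.labV p.2))

theorem shortest_path_kernel_psd_general {SV : Type*} (kV : SV → SV → ℝ)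
    (kE : ℕ∞ → ℕ∞ → ℝ) (hV : IsPSDKernel kV) (hE : IsPSDKernel kE)
    (n : ℕ) (Gs : Fin n → VLGraph SV) (c : Fin n → ℝ) :
    0 ≤ ∑ i, ∑ j, c i * c j * spKernel kV kE (Gs i) (Gs j) :=
  (isPSDKernel_spKernel hV hE).2 n Gs c

/-- If `k_V` is a positive semidefinite kernel on the vertex labels and `k_E` is
a positive semidefinite kernel on path lengths in `ℕ∞` vanishing whenever one of
its arguments is `∞`, then the shortest-path kernel is positive semidefinite:
every finite Gram matrix on labeled graphs it produces is positive
semidefinite. -/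
theorem shortest_path_kernel_psd {SV : Type*} (kV : SV → SV → ℝ)
    (kE : ℕ∞ → ℕ∞ → ℝ) (hV : IsPSDKernel kV) (hE : IsPSDKernel kE)
    (hE0 : ∀ d d' : ℕ∞, d = ⊤ ∨ d' = ⊤ → kE d d' = 0)
    (n : ℕ) (Gs : Fin n → VLGraph SV) (c : Fin n → ℝ) :
    0 ≤ ∑ i, ∑ j, c i * c j * spKernel kV kE (Gs i) (Gs j) :=
  shortest_path_kernel_psd_general kV kE hV hE n Gs c
end
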